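/- arXiv:2011.10724 — 3 statements merged into one kernel-verified Lean document; each statement's English description precedes it below -/
import Mathlib

section
/- Fix reals a < b and let F[a,b] be the set of functions f:ℝ→ℝ satisfying |f(x_1)−f(x_2)| ≤ |x_1−x_2| for all x_1,x_2 ∈ ℝ and f(x) = 0 for all x ∉ [a,b]. For any sequence (f_n) in F[a,b] and f ∈ F[a,b], the following are equivalent: (i) f_n → f uniformly on ℝ; (ii) for every integer k ≥ 0, ∫_a^b f_n(x)·x^k dx → ∫_a^b f(x)·x^k dx as n → ∞. -/
/-!
Regard `F[a,b]` as a subset of `C(ℝ, ℝ)` with the compact-open topology; since all its elements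
vanish off `[a,b]`, convergence there is uniform convergence on `ℝ`. By Arzelà–Ascoli `F[a,b]` is
compact, and the moment map `h ↦ (∫_a^b h(x) x^k dx)_k` is continuous. It is injective on `F[a,b]`:
by Weierstrass, a continuous function all of whose moments on `[a,b]` vanish is orthogonal to
itself, hence zero on `[a,b]`. A continuous injection of a compact space into a Hausdorff space is
an embedding, so convergence in `F[a,b]` is convergence of all moments.
-/

open Filter Topology
open scoped BigOperators

open Set Polynomial intervalIntegral
open scoped NNReal

theorem IsCompact.tendsto_nhds_iff_of_injOn {X Y ι : Type*} [TopologicalSpace X]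
    [TopologicalSpace Y] [T2Space Y] {s : Set X} (hs : IsCompact s) {f : X → Y}
    (hf : ContinuousOn f s) (hinj : InjOn f s) {l : Filter ι} {u : ι → X} (hu : ∀ i, u i ∈ s)
    {x : X} (hx : x ∈ s) : Tendsto u l (𝓝 x) ↔ Tendsto (f ∘ u) l (𝓝 (f x)) := by
  have := isCompact_iff_compactSpace.1 hs
  have hemb : IsClosedEmbedding (s.domRestrict f) :=
    hf.domRestrict.isClosedEmbedding (injOn_iff_injective.1 hinj)
  rw [← tendsto_subtype_rng (f := fun i => (⟨u i, hu i⟩ : s)) (x := ⟨x, hx⟩),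
    hemb.isInducing.tendsto_nhds_iff]
  rfl

theorem ContinuousMap.tendsto_iff_tendstoUniformly_of_eqOn_compl {α β ι : Type*}
    [TopologicalSpace α] [UniformSpace β] {s : Set α} (hs : IsCompact s) {l : Filter ι}
    {F : ι → C(α, β)} {G : C(α, β)} (hF : ∀ i, EqOn (F i) G sᶜ) :
    Tendsto F l (𝓝 G) ↔ TendstoUniformly (fun i => F i) G l := by
  refine ⟨fun h u hu => ?_, fun h => tendsto_of_tendstoLocallyUniformly h.tendstoLocallyUniformly⟩
  filter_upwards [tendsto_iff_forall_isCompact_tendstoUniformlyOn.1 h s hs u hu] with i hi x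
  by_cases hx : x ∈ s
  · exact hi x hx
  · rw [hF i hx]
    exact refl_mem_uniformity hu

section Moments

variable {a b : ℝ} {φ : ℝ → ℝ}

theorem integral_mul_eval_eq_zero_of_moments (hφ : Continuous φ)
    (h : ∀ k : ℕ, ∫ x in a..b, φ x * x ^ k = 0) (p : ℝ[X]) :
    ∫ x in a..b, φ x * p.eval x = 0 := by
  have hint : ∀ i ∈ Finset.range (p.natDegree + 1),
      IntervalIntegrable (fun x => φ x * (p.coeff i * x ^ i)) MeasureTheory.volume a b :=
    fun i _ => (hφ.mul (continuous_const.mul (continuous_pow i))).intervalIntegrable a b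
  simp_rw [eval_eq_sum_range, Finset.mul_sum]
  rw [integral_finsetSum hint]
  refine Finset.sum_eq_zero fun i _ => ?_
  simp_rw [mul_left_comm (φ _)]
  rw [integral_const_mul, h i, mul_zero]

theorem integral_mul_self_eq_zero_of_moments (hab : a ≤ b) (hφ : Continuous φ)
    (h : ∀ k : ℕ, ∫ x in a..b, φ x * x ^ k = 0) :
    ∫ x in a..b, φ x * φ x = 0 := by
  obtain ⟨M, hM⟩ := (isCompact_Icc (a := a) (b := b)).exists_bound_of_continuousOn hφ.continuousOn
  have hbound : ∀ ε > 0, |∫ x in a..b, φ x * φ x| ≤ M * ε * (b - a) := by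
    intro ε hε
    obtain ⟨p, hp⟩ := exists_polynomial_near_of_continuousOn a b φ hφ.continuousOn ε hε
    have hsplit : ∫ x in a..b, φ x * φ x = ∫ x in a..b, φ x * (φ x - p.eval x) := by
      simp_rw [mul_sub]
      rw [integral_sub (f := fun x => φ x * φ x) (g := fun x => φ x * p.eval x)
        ((hφ.mul hφ).intervalIntegrable a b) ((hφ.mul p.continuous).intervalIntegrable a b),
        integral_mul_eval_eq_zero_of_moments hφ h p, sub_zero]
    rw [hsplit, ← Real.norm_eq_abs, ← abs_of_nonneg (sub_nonneg.2 hab)]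
    refine norm_integral_le_of_norm_le_const fun x hx => ?_
    have hx : x ∈ Icc a b := Ioc_subset_Icc_self (uIoc_of_le hab ▸ hx)
    rw [norm_mul]
    exact mul_le_mul (hM x hx) (by simpa [abs_sub_comm] using (hp x hx).le) (norm_nonneg _)
      ((norm_nonneg _).trans (hM x hx))
  have hlim : Tendsto (fun ε => M * ε * (b - a)) (𝓝[>] 0) (𝓝 0) :=
    tendsto_nhdsWithin_of_tendsto_nhds <|
      (by fun_prop : Continuous fun ε : ℝ => M * ε * (b - a)).tendsto' 0 0 (by simp)
  exact abs_nonpos_iff.1 (ge_of_tendsto hlim (eventually_nhdsWithin_of_forall hbound))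

theorem eqOn_zero_of_moments (hab : a < b) (hφ : Continuous φ)
    (h : ∀ k : ℕ, ∫ x in a..b, φ x * x ^ k = 0) : EqOn φ 0 (Icc a b) := by
  intro c hc
  by_contra hne
  have hpos := integral_pos hab (hφ.mul hφ).continuousOn (fun x _ => mul_self_nonneg (φ x))
    ⟨c, hc, mul_self_pos.2 hne⟩
  exact hpos.ne' (integral_mul_self_eq_zero_of_moments hab.le hφ h)

end Moments

def lipschitzSupportedIcc (K : ℝ≥0) (a b : ℝ) : Set C(ℝ, ℝ) :=
  {h | LipschitzWith K h ∧ ∀ x ∉ Icc a b, h x = 0}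

noncomputable def moments (a b : ℝ) (h : C(ℝ, ℝ)) (k : ℕ) : ℝ := ∫ x in a..b, h x * x ^ k

section LipschitzSupportedIcc

variable {K : ℝ≥0} {a b : ℝ}

theorem continuous_moments : Continuous (moments a b) :=
  continuous_pi fun k => continuous_parametric_intervalIntegral_of_continuous'
    (by fun_prop : Continuous fun p : C(ℝ, ℝ) × ℝ => p.1 p.2 * p.2 ^ k) a b

theorem isCompact_lipschitzSupportedIcc : IsCompact (lipschitzSupportedIcc K a b) := by
  set P : Set (ℝ → ℝ) := {h | LipschitzWith K h ∧ ∀ x ∉ Icc a b, h x = 0}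
  have hP : IsClosed P := (isClosed_setOfPred_lipschitzWith K).inter <| by
    show IsClosed {h : ℝ → ℝ | ∀ x ∉ Icc a b, h x = 0}
    simp only [ofPred_forall]
    exact isClosed_iInter fun x => isClosed_iInter fun _ =>
      isClosed_eq (continuous_apply x) continuous_const
  -- `h ∈ P` vanishes at `a - 1`, which bounds `|h x|` by `K * |x - (a - 1)|`
  have hbound : P ⊆ univ.pi fun x => Icc (-(K * |x - (a - 1)|)) (K * |x - (a - 1)|) := by
    intro h ⟨hlip, hsupp⟩ x _
    have := hlip.dist_le_mul x (a - 1)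
    rw [hsupp (a - 1) (fun hx => by linarith [hx.1]), Real.dist_eq, Real.dist_eq, sub_zero] at this
    exact abs_le.1 this
  have himage : ContinuousMap.toFun '' lipschitzSupportedIcc K a b = P :=
    Subset.antisymm (fun _ ⟨h, hh, hh'⟩ => hh' ▸ hh)
      fun h hh => ⟨⟨h, hh.1.continuous⟩, hh, rfl⟩
  refine ArzelaAscoli.isCompact_of_equicontinuous _ ?_
    (LipschitzWith.uniformEquicontinuous _ K fun h => h.2.1).equicontinuous
  rw [himage]
  exact (isCompact_univ_pi fun x => isCompact_Icc).of_isClosed_subset hP hbound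

theorem injOn_moments (hab : a < b) : InjOn (moments a b) (lipschitzSupportedIcc K a b) := by
  intro h ⟨_, hsupp⟩ h' ⟨_, hsupp'⟩ heq
  have hzero : ∀ k : ℕ, ∫ x in a..b, (h x - h' x) * x ^ k = 0 := by
    intro k
    simp_rw [sub_mul]
    rw [integral_sub (f := fun x => h x * x ^ k) (g := fun x => h' x * x ^ k)
      ((h.continuous.mul (continuous_pow k)).intervalIntegrable a b)
      ((h'.continuous.mul (continuous_pow k)).intervalIntegrable a b)]
    exact sub_eq_zero.2 (congrFun heq k)
  ext x
  by_cases hx : x ∈ Icc a b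
  · exact sub_eq_zero.1 (eqOn_zero_of_moments hab (h.continuous.sub h'.continuous) hzero hx)
  · rw [hsupp x hx, hsupp' x hx]

theorem tendsto_iff_tendsto_moments (hab : a < b) {ι : Type*} {l : Filter ι} {F : ι → C(ℝ, ℝ)}
    {G : C(ℝ, ℝ)} (hF : ∀ i, F i ∈ lipschitzSupportedIcc K a b)
    (hG : G ∈ lipschitzSupportedIcc K a b) :
    Tendsto F l (𝓝 G) ↔ ∀ k, Tendsto (fun i => moments a b (F i) k) l (𝓝 (moments a b G k)) :=
  (isCompact_lipschitzSupportedIcc.tendsto_nhds_iff_of_injOn continuous_moments.continuousOn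
    (injOn_moments hab) hF hG).trans tendsto_pi_nhds

end LipschitzSupportedIcc

/-- Lemma 2.1 of Bufetov.
On the set `F[a,b]` of Lipschitz-1 functions supported on `[a,b]`, uniform convergence is
equivalent to convergence of all the moment functionals `f ↦ ∫_a^b f(x) x^k dx`. -/
theorem stmt5 (a b : ℝ) (hab : a < b) (f : ℕ → ℝ → ℝ) (g : ℝ → ℝ)
    (hf : ∀ n, (∀ x y : ℝ, |f n x - f n y| ≤ |x - y|) ∧ ∀ x ∉ Set.Icc a b, f n x = 0)
    (hg : (∀ x y : ℝ, |g x - g y| ≤ |x - y|) ∧ ∀ x ∉ Set.Icc a b, g x = 0) :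
    TendstoUniformly f g atTop ↔
      ∀ k : ℕ, Tendsto (fun n : ℕ => ∫ x in a..b, f n x * x ^ k) atTop
        (𝓝 (∫ x in a..b, g x * x ^ k)) := by
  have lipschitz {u : ℝ → ℝ} (hu : ∀ x y : ℝ, |u x - u y| ≤ |x - y|) : LipschitzWith 1 u :=
    LipschitzWith.mk_one fun x y => by simpa only [Real.dist_eq] using hu x y
  let F (n : ℕ) : C(ℝ, ℝ) := ⟨f n, (lipschitz (hf n).1).continuous⟩
  let G : C(ℝ, ℝ) := ⟨g, (lipschitz hg.1).continuous⟩
  have hFG (n : ℕ) : EqOn (F n) G (Icc a b)ᶜ := fun x hx => by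
    simp only [F, G, ContinuousMap.coe_mk, (hf n).2 x hx, hg.2 x hx]
  exact (ContinuousMap.tendsto_iff_tendstoUniformly_of_eqOn_compl isCompact_Icc hFG).symm.trans <|
    tendsto_iff_tendsto_moments hab (fun n => ⟨lipschitz (hf n).1, (hf n).2⟩)
      ⟨lipschitz hg.1, hg.2⟩
end

section
/- Let N, k ≥ 1 and let f be a smooth function on an open subset of ℝ^N (or a holomorphic function on an open subset of ℂ^N) consisting of points with pairwise distinct coordinates. Then at every such point, D_{N,k} f = Σ_{m=1}^k S(k,m)·Σ_{ℓ=0}^m binom(m,ℓ)·ℓ!·Σ_{{i_0,…,i_ℓ}⊆{1,…,N}} Σ_cyc (x_{i_0}^m ∂_{i_0}^{m−ℓ} f)/((x_{i_0}−x_{i_1})(x_{i_0}−x_{i_2})⋯(x_{i_0}−x_{i_ℓ})), where S(k,m) are the Stirling numbers of the second kind, the innermost subset sum is over (ℓ+1)-element subsets of {1,…,N}, and Σ_cyc denotes the sum over cyclic rotations of the index tuple (i_0,…,i_ℓ). -/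
/-!
Coordinatewise, `(x_i ∂_i)^k = Σ_m S(k,m) x_i^m ∂_i^m`: the Stirling recursion
`S(k+1,m) = m S(k,m) + S(k,m-1)` is exactly `x∂ (x^m ∂^m) = m x^m ∂^m + x^(m+1) ∂^(m+1)`.
Leibniz splits `∂_i^m (Δ f)` into `Σ_ℓ C(m,ℓ) ∂_i^ℓ Δ · ∂_i^(m-ℓ) f`. Logarithmic differentiation
gives `∂_i Δ = Δ Σ_{j ≠ i} (x_i - x_j)⁻¹` and
`∂_i ∏_{j ∈ B} (x_i - x_j)⁻¹ = -(Σ_{j ∈ B} (x_i - x_j)⁻¹) ∏_{j ∈ B} (x_i - x_j)⁻¹`, so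
differentiating `Δ ∏_{j ∈ B} (x_i - x_j)⁻¹` adds one new index `j ∉ B ∪ {i}` to `B`; since every
`(ℓ+1)`-set arises from `ℓ + 1` sets `B`, `∂_i^ℓ Δ = ℓ! Δ Σ_{|B| = ℓ, i ∉ B} ∏_{j ∈ B} (x_i - x_j)⁻¹`.
Dividing by `Δ` and grouping the pairs `(i, B)` into the sets `A = B ∪ {i}` gives the formula.
-/

open Filter Topology
open scoped BigOperators

/-- Partial derivative in the `j`-th coordinate. -/
noncomputable def pd {N : ℕ} (j : Fin N) (f : (Fin N → ℂ) → ℂ) : (Fin N → ℂ) → ℂ :=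
  fun x => fderiv ℂ f x (Pi.single j 1)

/-- Iterated partial derivatives along a list of coordinates. -/
noncomputable def pds {N : ℕ} : List (Fin N) → ((Fin N → ℂ) → ℂ) → ((Fin N → ℂ) → ℂ)
  | [], f => f
  | j :: t, f => pd j (pds t f)

/-- The operator `x_j ∂_j`. -/
noncomputable def xd {N : ℕ} (j : Fin N) (f : (Fin N → ℂ) → ℂ) : (Fin N → ℂ) → ℂ :=
  fun x => x j * pd j f x

/-- Vandermonde determinant in the first `M` of `N` variables. -/
noncomputable def vandOn {N : ℕ} (M : ℕ) (h : M ≤ N) (x : Fin N → ℂ) : ℂ :=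
  ∏ i : Fin M, ∏ j : Fin M, if i < j then x (Fin.castLE h i) - x (Fin.castLE h j) else 1

/-- The differential operator `D_{M,k}` acting on functions of `N ≥ M` variables, in the first
`M` variables only: `D_{M,k} f = Δ_M⁻¹ (Σ_{i=1}^M (x_i ∂_i)^k)(Δ_M f)`. -/
noncomputable def DopOn {N : ℕ} (M : ℕ) (h : M ≤ N) (k : ℕ) (f : (Fin N → ℂ) → ℂ) :
    (Fin N → ℂ) → ℂ :=
  fun x => (vandOn M h x)⁻¹ *
    ∑ i : Fin M, (xd (Fin.castLE h i))^[k] (fun y => vandOn M h y * f y) x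

/-- Stirling numbers of the second kind. -/
def stirling2 : ℕ → ℕ → ℕ
  | 0, 0 => 1
  | 0, _ + 1 => 0
  | _ + 1, 0 => 0
  | k + 1, m + 1 => (m + 1) * stirling2 k (m + 1) + stirling2 k m

theorem stirling2_eq_stirlingSecond : stirling2 = Nat.stirlingSecond := by
  funext k m
  induction k generalizing m with
  | zero => cases m <;> rfl
  | succ k ih =>
    cases m with
    | zero => rfl
    | succ m => rw [stirling2, Nat.stirlingSecond_succ_succ, ih, ih]

theorem Nat.sum_range_stirlingSecond_succ {R : Type*} [CommSemiring R] (k : ℕ) (a : ℕ → R) :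
    ∑ m ∈ Finset.range (k + 2), (Nat.stirlingSecond (k + 1) m : R) * a m =
      ∑ m ∈ Finset.range (k + 1), (Nat.stirlingSecond k m : R) * (m * a m + a (m + 1)) := by
  have hshift : ∑ m ∈ Finset.range (k + 1), (Nat.stirlingSecond k m : R) * (m * a m) =
      ∑ m ∈ Finset.range (k + 1),
        (Nat.stirlingSecond k (m + 1) : R) * ((m + 1 : ℕ) * a (m + 1)) := by
    rw [Finset.sum_range_succ', Finset.sum_range_succ _ k,
      Nat.stirlingSecond_eq_zero_of_lt (Nat.lt_succ_self k)]
    simp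
  rw [Finset.sum_range_succ', Nat.stirlingSecond_succ_zero, Nat.cast_zero, zero_mul, add_zero]
  simp only [mul_add, Finset.sum_add_distrib]
  rw [hshift, ← Finset.sum_add_distrib]
  refine Finset.sum_congr rfl fun m _ => ?_
  rw [Nat.stirlingSecond_succ_succ]
  push_cast
  ring

theorem Nat.sum_range_stirlingSecond_eq_sum_Icc {R : Type*} [NonAssocSemiring R] {k : ℕ}
    (hk : k ≠ 0) (a : ℕ → R) :
    ∑ m ∈ Finset.range (k + 1), (Nat.stirlingSecond k m : R) * a m =
      ∑ m ∈ Finset.Icc 1 k, (Nat.stirlingSecond k m : R) * a m := by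
  obtain ⟨k, rfl⟩ := Nat.exists_eq_add_one_of_ne_zero hk
  rw [Finset.sum_range_eq_add_Ico _ (Nat.succ_pos _), Nat.stirlingSecond_succ_zero, Nat.cast_zero,
    zero_mul, zero_add, Nat.succ_eq_add_one, Finset.Ico_add_one_right_eq_Icc]

namespace Finset

variable {α M : Type*} [DecidableEq α] [AddCommMonoid M]

theorem sum_sum_powersetCard_erase (s : Finset α) (ℓ : ℕ) (F : α → Finset α → M) :
    ∑ i ∈ s, ∑ B ∈ (s.erase i).powersetCard ℓ, F i B =
      ∑ A ∈ s.powersetCard (ℓ + 1), ∑ i ∈ A, F i (A.erase i) := by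
  rw [sum_sigma', sum_sigma']
  refine sum_nbij' (fun p => ⟨insert p.1 p.2, p.1⟩) (fun q => ⟨q.2, q.1.erase q.2⟩)
    ?_ ?_ ?_ ?_ ?_
  · rintro ⟨i, B⟩ h
    simp only [mem_sigma, mem_powersetCard, subset_erase] at h ⊢
    obtain ⟨hi, ⟨hBs, hiB⟩, hcard⟩ := h
    exact ⟨⟨insert_subset hi hBs, by rw [card_insert_of_notMem hiB, hcard]⟩,
      mem_insert_self _ _⟩
  · rintro ⟨A, i⟩ h
    simp only [mem_sigma, mem_powersetCard] at h ⊢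
    obtain ⟨⟨hAs, hcard⟩, hi⟩ := h
    exact ⟨hAs hi, erase_subset_erase i hAs,
      by rw [card_erase_of_mem hi, hcard, Nat.add_sub_cancel]⟩
  · rintro ⟨i, B⟩ h
    simp only [mem_sigma, mem_powersetCard, subset_erase] at h
    simp [erase_insert h.2.1.2]
  · rintro ⟨A, i⟩ h
    simp only [mem_sigma] at h
    simp [insert_erase h.2]
  · rintro ⟨i, B⟩ h
    simp only [mem_sigma, mem_powersetCard, subset_erase] at h
    simp [erase_insert h.2.1.2]

theorem sum_powersetCard_sum_sdiff_insert (s : Finset α) (ℓ : ℕ) (F : Finset α → M) :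
    ∑ B ∈ s.powersetCard ℓ, ∑ j ∈ s \ B, F (insert j B) =
      (ℓ + 1) • ∑ A ∈ s.powersetCard (ℓ + 1), F A := by
  rw [sum_comm' (t' := s) (s' := fun j => (s.erase j).powersetCard ℓ),
    sum_sum_powersetCard_erase, smul_sum]
  · refine sum_congr rfl fun A hA => ?_
    rw [sum_congr rfl fun j hj => by rw [insert_erase hj], sum_const, (mem_powersetCard.1 hA).2]
  · intro B j
    simp only [mem_powersetCard, mem_sdiff, subset_erase]
    tauto

end Finset

section PartialDerivatives

variable {N : ℕ} {f g : (Fin N → ℂ) → ℂ} {x : Fin N → ℂ} {i : Fin N}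

theorem HasFDerivAt.pd_eq {L : (Fin N → ℂ) →L[ℂ] ℂ} (h : HasFDerivAt f L x) :
    pd i f x = L (Pi.single i 1) := by
  rw [pd, h.fderiv]

theorem pd_congr_of_eqOn {U : Set (Fin N → ℂ)} (hU : IsOpen U) (hx : x ∈ U)
    (h : Set.EqOn f g U) : pd i f x = pd i g x := by
  rw [pd, pd, (h.eventuallyEq_of_mem (hU.mem_nhds hx)).fderiv_eq]

theorem pd_mul (hf : DifferentiableAt ℂ f x) (hg : DifferentiableAt ℂ g x) :
    pd i (fun y => f y * g y) x = pd i f x * g x + f x * pd i g x := by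
  rw [(hf.hasFDerivAt.fun_mul hg.hasFDerivAt).pd_eq, pd, pd]
  simp only [add_apply, smul_apply, smul_eq_mul]
  ring

theorem pd_const_mul (c : ℂ) (hf : DifferentiableAt ℂ f x) :
    pd i (fun y => c * f y) x = c * pd i f x := by
  rw [(hf.hasFDerivAt.const_mul c).pd_eq, pd, smul_apply, smul_eq_mul]

theorem pd_sum {ι : Type*} (s : Finset ι) {F : ι → (Fin N → ℂ) → ℂ}
    (hF : ∀ b ∈ s, DifferentiableAt ℂ (F b) x) :
    pd i (fun y => ∑ b ∈ s, F b y) x = ∑ b ∈ s, pd i (F b) x := by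
  rw [(HasFDerivAt.fun_sum fun b hb => (hF b hb).hasFDerivAt).pd_eq,
    FunLike.coe_sum, Finset.sum_apply]
  rfl

theorem pd_prod_eq_mul_sum_div {ι : Type*} [DecidableEq ι] (s : Finset ι)
    {F : ι → (Fin N → ℂ) → ℂ} (hF : ∀ b ∈ s, DifferentiableAt ℂ (F b) x)
    (hF0 : ∀ b ∈ s, F b x ≠ 0) :
    pd i (fun y => ∏ b ∈ s, F b y) x =
      (∏ b ∈ s, F b x) * ∑ b ∈ s, pd i (F b) x / F b x := by
  rw [(HasFDerivAt.finsetProd fun b hb => (hF b hb).hasFDerivAt).pd_eq,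
    FunLike.coe_sum, Finset.sum_apply, Finset.mul_sum]
  refine Finset.sum_congr rfl fun b hb => ?_
  rw [← Finset.mul_prod_erase s _ hb, smul_apply, smul_eq_mul, pd]
  field_simp [hF0 b hb]

theorem pd_inv (hf : DifferentiableAt ℂ f x) (hf0 : f x ≠ 0) :
    pd i (fun y => (f y)⁻¹) x = -pd i f x / f x ^ 2 := by
  rw [HasFDerivAt.pd_eq (f := fun y => (f y)⁻¹)
    ((hasDerivAt_inv hf0).comp_hasFDerivAt x hf.hasFDerivAt), pd,
    smul_apply, smul_eq_mul]
  ring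

theorem pd_pow_self (m : ℕ) : pd i (fun y => y i ^ m) x = m * x i ^ (m - 1) := by
  rw [HasFDerivAt.pd_eq (f := fun y => y i ^ m)
    ((hasDerivAt_pow m (x i)).comp_hasFDerivAt x (hasFDerivAt_apply i x))]
  simp

theorem pd_sub_apply (a b : Fin N) :
    pd i (fun y => y a - y b) x =
      (Pi.single i 1 : Fin N → ℂ) a - (Pi.single i 1 : Fin N → ℂ) b := by
  rw [((hasFDerivAt_apply a x).fun_sub (hasFDerivAt_apply b x)).pd_eq]
  rfl

variable {U : Set (Fin N → ℂ)}

theorem ContDiffOn.differentiableAt_of_isOpen (hf : ContDiffOn ℂ ⊤ f U) (hU : IsOpen U)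
    (hx : x ∈ U) : DifferentiableAt ℂ f x :=
  (hf.differentiableOn (by simp)).differentiableAt (hU.mem_nhds hx)

theorem ContDiffOn.pd (hf : ContDiffOn ℂ ⊤ f U) (hU : IsOpen U) (i : Fin N) :
    ContDiffOn ℂ ⊤ (pd i f) U :=
  (hf.fderiv_of_isOpen hU le_top).clm_apply contDiffOn_const

theorem ContDiffOn.pds (hf : ContDiffOn ℂ ⊤ f U) (hU : IsOpen U) :
    ∀ l : List (Fin N), ContDiffOn ℂ ⊤ (_root_.pds l f) U
  | [] => hf
  | j :: l => (hf.pds hU l).pd hU j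

end PartialDerivatives

noncomputable def pdIter {N : ℕ} (i : Fin N) (m : ℕ) (f : (Fin N → ℂ) → ℂ) :
    (Fin N → ℂ) → ℂ :=
  pds (List.replicate m i) f

section IteratedPartialDerivatives

variable {N : ℕ} {U : Set (Fin N → ℂ)} {f g : (Fin N → ℂ) → ℂ} {x : Fin N → ℂ}
variable (i : Fin N)

theorem pdIter_succ (m : ℕ) : pdIter i (m + 1) f = pd i (pdIter i m f) := rfl

theorem ContDiffOn.pdIter (hf : ContDiffOn ℂ ⊤ f U) (hU : IsOpen U) (m : ℕ) :
    ContDiffOn ℂ ⊤ (_root_.pdIter i m f) U :=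
  hf.pds hU _

theorem pdIter_mul (hU : IsOpen U) (hf : ContDiffOn ℂ ⊤ f U) (hg : ContDiffOn ℂ ⊤ g U)
    (m : ℕ) (hx : x ∈ U) :
    pdIter i m (fun y => f y * g y) x =
      ∑ ℓ ∈ Finset.range (m + 1),
        (m.choose ℓ : ℂ) * (pdIter i ℓ f x * pdIter i (m - ℓ) g x) := by
  induction m generalizing x with
  | zero => simp [pdIter, pds]
  | succ m ih =>
    have hd : ∀ a b, DifferentiableAt ℂ (fun y => pdIter i a f y * pdIter i b g y) x :=
      fun a b => ((hf.pdIter i hU a).mul (hg.pdIter i hU b)).differentiableAt_of_isOpen hU hx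
    rw [pdIter_succ, pd_congr_of_eqOn hU hx fun y hy => ih hy,
      pd_sum _ fun ℓ _ => (hd ℓ (m - ℓ)).const_mul _,
      Finset.sum_choose_succ_mul (fun a b => pdIter i a f x * pdIter i b g x) m,
      ← Finset.sum_add_distrib]
    refine Finset.sum_congr rfl fun ℓ hℓ => ?_
    have hℓm : m + 1 - ℓ = m - ℓ + 1 := by
      have := Finset.mem_range.1 hℓ
      omega
    rw [pd_const_mul _ (hd ℓ (m - ℓ)),
      pd_mul ((hf.pdIter i hU ℓ).differentiableAt_of_isOpen hU hx)
        ((hg.pdIter i hU (m - ℓ)).differentiableAt_of_isOpen hU hx), hℓm]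
    simp only [pdIter_succ]
    ring

theorem xd_pow_self (m : ℕ) : xd i (fun y => y i ^ m) x = m * x i ^ m := by
  rw [xd, pd_pow_self]
  cases m with
  | zero => simp
  | succ m => rw [Nat.add_sub_cancel, pow_succ]; ring

theorem iterate_xd_eq_sum_stirlingSecond (hU : IsOpen U) (hg : ContDiffOn ℂ ⊤ g U) (k : ℕ)
    (hx : x ∈ U) :
    (xd i)^[k] g x =
      ∑ m ∈ Finset.range (k + 1),
        (Nat.stirlingSecond k m : ℂ) * (x i ^ m * pdIter i m g x) := by
  induction k generalizing x with
  | zero => simp [pdIter, pds]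
  | succ k ih =>
    have hd : ∀ m, DifferentiableAt ℂ (fun y => y i ^ m * pdIter i m g y) x := fun m =>
      ((differentiableAt_apply i x).pow m).mul ((hg.pdIter i hU m).differentiableAt_of_isOpen hU hx)
    rw [Function.iterate_succ_apply', xd, pd_congr_of_eqOn hU hx fun y hy => ih hy,
      pd_sum _ fun m _ => (hd m).const_mul _, Finset.mul_sum,
      Nat.sum_range_stirlingSecond_succ k fun m => x i ^ m * pdIter i m g x]
    refine Finset.sum_congr rfl fun m _ => ?_
    have hpow : x i * pd i (fun y => y i ^ m) x = m * x i ^ m := xd_pow_self i m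
    rw [pd_const_mul _ (hd m), pd_mul (f := fun y => y i ^ m) ((differentiableAt_apply i x).pow m)
      ((hg.pdIter i hU m).differentiableAt_of_isOpen hU hx), ← pdIter_succ]
    linear_combination (Nat.stirlingSecond k m * pdIter i m g x) * hpow

end IteratedPartialDerivatives

section Vandermonde

variable {N : ℕ} {U : Set (Fin N → ℂ)} {x : Fin N → ℂ}

noncomputable def vand (x : Fin N → ℂ) : ℂ :=
  ∏ p ∈ Finset.univ.filter (fun p : Fin N × Fin N => p.1 < p.2), (x p.1 - x p.2)

noncomputable def prodInvSub (i : Fin N) (B : Finset (Fin N)) (x : Fin N → ℂ) : ℂ :=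
  ∏ j ∈ B, (x i - x j)⁻¹

theorem vandOn_self : vandOn N le_rfl = vand (N := N) := by
  funext x
  rw [vandOn, vand, Finset.prod_filter, Fintype.prod_prod_type]
  simp

theorem vand_ne_zero (hx : Function.Injective x) : vand x ≠ 0 :=
  Finset.prod_ne_zero_iff.2 fun _ hp =>
    sub_ne_zero.2 (hx.ne (Finset.mem_filter.1 hp).2.ne)

theorem contDiff_vand : ContDiff ℂ ⊤ (vand (N := N)) :=
  contDiff_prod fun p _ => (contDiff_apply ℂ ℂ p.1).sub (contDiff_apply ℂ ℂ p.2)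

theorem differentiableAt_prodInvSub (hx : Function.Injective x) {i : Fin N}
    {B : Finset (Fin N)} (hB : i ∉ B) : DifferentiableAt ℂ (prodInvSub i B) x := by
  have hd : ∀ j ∈ B, DifferentiableAt ℂ (fun y : Fin N → ℂ => (y i - y j)⁻¹) x :=
    fun j hj => by fun_prop (disch := exact sub_ne_zero.2 (hx.ne (ne_of_mem_of_not_mem hj hB).symm))
  exact (HasFDerivAt.finsetProd fun j hj => (hd j hj).hasFDerivAt).differentiableAt

theorem pd_vand (hx : Function.Injective x) (i : Fin N) :
    pd i vand x = vand x * ∑ j ∈ Finset.univ.erase i, (x i - x j)⁻¹ := by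
  -- only the pairs `(i, b)` and `(a, i)` contribute, each with `(x i - x _)⁻¹`
  have hsplit : ∀ a b : Fin N,
      (if a < b then
        ((Pi.single i 1 : Fin N → ℂ) a - (Pi.single i 1 : Fin N → ℂ) b) / (x a - x b)
        else 0) =
      (if a = i then (if i < b then (x i - x b)⁻¹ else 0) else 0) +
        (if b = i then (if a < i then (x i - x a)⁻¹ else 0) else 0) := by
    intro a b
    rcases eq_or_ne a i with rfl | ha
    · rcases eq_or_ne b a with rfl | hb
      · simp
      · simp [hb]
    · rcases eq_or_ne b i with rfl | hb
      · by_cases hab : a < b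
        · simp [hab, ha, div_eq_mul_inv, ← inv_neg]
        · simp [hab]
      · simp [ha, hb]
  refine (pd_prod_eq_mul_sum_div (F := fun (p : Fin N × Fin N) y => y p.1 - y p.2) _
    (fun p _ => by fun_prop)
    (fun p hp => sub_ne_zero.2 (hx.ne (Finset.mem_filter.1 hp).2.ne))).trans ?_
  congr 1
  simp only [pd_sub_apply]
  rw [Finset.sum_filter, Fintype.sum_prod_type]
  simp only [hsplit, Finset.sum_add_distrib]
  simp only [Finset.sum_ite_irrel, Finset.sum_const_zero, Finset.sum_ite_eq', Finset.mem_univ,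
    if_true, Finset.sum_erase_eq_sub, sub_self, inv_zero, sub_zero]
  rw [← Finset.sum_add_distrib]
  refine Finset.sum_congr rfl fun j _ => ?_
  rcases lt_trichotomy i j with h | rfl | h
  · simp [h, h.not_gt]
  · simp
  · simp [h, h.not_gt]

theorem pd_prodInvSub (hx : Function.Injective x) {i : Fin N} {B : Finset (Fin N)}
    (hB : i ∉ B) :
    pd i (prodInvSub i B) x = -(prodInvSub i B x * ∑ j ∈ B, (x i - x j)⁻¹) := by
  have hsub : ∀ j ∈ B, x i - x j ≠ 0 := fun j hj =>
    sub_ne_zero.2 (hx.ne (ne_of_mem_of_not_mem hj hB).symm)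
  refine (pd_prod_eq_mul_sum_div (F := fun j y => (y i - y j)⁻¹) B
    (fun j hj => ((differentiableAt_apply i x).sub (differentiableAt_apply j x)).inv (hsub j hj))
    (fun j hj => inv_ne_zero (hsub j hj))).trans ?_
  rw [← mul_neg, ← Finset.sum_neg_distrib]
  refine congrArg _ (Finset.sum_congr rfl fun j hj => ?_)
  rw [pd_inv (by fun_prop) (hsub j hj), pd_sub_apply]
  field_simp
  simp [ne_of_mem_of_not_mem hj hB]

theorem pd_vand_mul_prodInvSub (hx : Function.Injective x) {i : Fin N} {B : Finset (Fin N)}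
    (hB : i ∉ B) :
    pd i (fun y => vand y * prodInvSub i B y) x =
      ∑ j ∈ Finset.univ.erase i \ B, vand x * prodInvSub i (insert j B) x := by
  have hBi : B ⊆ Finset.univ.erase i := Finset.subset_erase.2 ⟨Finset.subset_univ B, hB⟩
  calc _ = vand x * prodInvSub i B x * ∑ j ∈ Finset.univ.erase i \ B, (x i - x j)⁻¹ := by
        rw [pd_mul (contDiff_vand.differentiable (by simp) x) (differentiableAt_prodInvSub hx hB),
          pd_vand hx, pd_prodInvSub hx hB, Finset.sum_sdiff_eq_sub hBi]
        ring
    _ = _ := by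
        rw [Finset.mul_sum]
        refine Finset.sum_congr rfl fun j hj => ?_
        simp only [prodInvSub, Finset.prod_insert (Finset.mem_sdiff.1 hj).2]
        ring

theorem pdIter_vand (hU : IsOpen U) (hinj : ∀ y ∈ U, Function.Injective y) (i : Fin N)
    (ℓ : ℕ) (hx : x ∈ U) :
    pdIter i ℓ vand x =
      ℓ.factorial *
        ∑ B ∈ (Finset.univ.erase i).powersetCard ℓ, vand x * prodInvSub i B x := by
  induction ℓ generalizing x with
  | zero => simp [pdIter, pds, prodInvSub]
  | succ ℓ ih =>
    have hnot : ∀ B ∈ (Finset.univ.erase i).powersetCard ℓ, i ∉ B := fun B hB =>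
      (Finset.subset_erase.1 (Finset.mem_powersetCard.1 hB).1).2
    have hd : ∀ B ∈ (Finset.univ.erase i).powersetCard ℓ,
        DifferentiableAt ℂ (fun y => vand y * prodInvSub i B y) x := fun B hB =>
      (contDiff_vand.differentiable (by simp) x).mul
        (differentiableAt_prodInvSub (hinj x hx) (hnot B hB))
    rw [pdIter_succ, pd_congr_of_eqOn hU hx fun y hy => ih hy,
      pd_const_mul _ (DifferentiableAt.fun_sum hd), pd_sum _ hd,
      Finset.sum_congr rfl fun B hB => pd_vand_mul_prodInvSub (hinj x hx) (hnot B hB),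
      Finset.sum_powersetCard_sum_sdiff_insert _ _ fun A => vand x * prodInvSub i A x,
      Nat.factorial_succ, nsmul_eq_mul]
    push_cast
    ring

end Vandermonde

theorem vand_inv_mul_iterate_xd_vand_mul {N : ℕ} {U : Set (Fin N → ℂ)}
    {f : (Fin N → ℂ) → ℂ} {x : Fin N → ℂ} (hU : IsOpen U)
    (hinj : ∀ y ∈ U, Function.Injective y) (hf : ContDiffOn ℂ ⊤ f U) (i : Fin N) (k : ℕ)
    (hx : x ∈ U) :
    (vand x)⁻¹ * (xd i)^[k] (fun y => vand y * f y) x =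
      ∑ m ∈ Finset.range (k + 1), (Nat.stirlingSecond k m : ℂ) *
        ∑ ℓ ∈ Finset.range (m + 1), (m.choose ℓ : ℂ) * ℓ.factorial *
          ∑ B ∈ (Finset.univ.erase i).powersetCard ℓ,
            x i ^ m * pdIter i (m - ℓ) f x * prodInvSub i B x := by
  have hvand : vand x ≠ 0 := vand_ne_zero (hinj x hx)
  rw [iterate_xd_eq_sum_stirlingSecond i hU (contDiff_vand.contDiffOn.mul hf) k hx]
  simp only [pdIter_mul i hU contDiff_vand.contDiffOn hf _ hx, pdIter_vand hU hinj i _ hx,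
    Finset.mul_sum, Finset.sum_mul]
  refine Finset.sum_congr rfl fun m _ => Finset.sum_congr rfl fun ℓ _ =>
    Finset.sum_congr rfl fun B _ => ?_
  field_simp

theorem stmt12_general (N k : ℕ) (hk : 1 ≤ k)
    (f : (Fin N → ℂ) → ℂ) (U : Set (Fin N → ℂ)) (hU : IsOpen U)
    (hinj : ∀ x ∈ U, Function.Injective x) (hf : ContDiffOn ℂ ⊤ f U) :
    ∀ x ∈ U, DopOn (N := N) N le_rfl k f x =
      ∑ m ∈ Finset.Icc 1 k, (stirling2 k m : ℂ) *
        ∑ ℓ ∈ Finset.range (m + 1), (m.choose ℓ : ℂ) * (ℓ.factorial : ℂ) *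
          ∑ A ∈ (Finset.univ : Finset (Fin N)).powersetCard (ℓ + 1), ∑ i0 ∈ A,
            x i0 ^ m * pds (List.replicate (m - ℓ) i0) f x /
              ∏ j ∈ A.erase i0, (x i0 - x j) := by
  intro x hx
  calc DopOn N le_rfl k f x
      = ∑ i, (vand x)⁻¹ * (xd i)^[k] (fun y => vand y * f y) x := by
        rw [DopOn, vandOn_self, Finset.mul_sum]
        simp
    _ = ∑ i, ∑ m ∈ Finset.range (k + 1), (Nat.stirlingSecond k m : ℂ) *
          ∑ ℓ ∈ Finset.range (m + 1), (m.choose ℓ : ℂ) * ℓ.factorial *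
            ∑ B ∈ (Finset.univ.erase i).powersetCard ℓ,
              x i ^ m * pdIter i (m - ℓ) f x * prodInvSub i B x :=
        Finset.sum_congr rfl fun i _ => vand_inv_mul_iterate_xd_vand_mul hU hinj hf i k hx
    _ = ∑ m ∈ Finset.range (k + 1), (Nat.stirlingSecond k m : ℂ) *
          ∑ ℓ ∈ Finset.range (m + 1), (m.choose ℓ : ℂ) * ℓ.factorial *
            ∑ A ∈ Finset.univ.powersetCard (ℓ + 1), ∑ i0 ∈ A,
              x i0 ^ m * pdIter i0 (m - ℓ) f x * prodInvSub i0 (A.erase i0) x := by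
        simp only [Finset.mul_sum]
        rw [Finset.sum_comm]
        refine Finset.sum_congr rfl fun m _ => ?_
        rw [Finset.sum_comm]
        exact Finset.sum_congr rfl fun ℓ _ => Finset.sum_sum_powersetCard_erase _ _ _
    _ = _ := by
        rw [Nat.sum_range_stirlingSecond_eq_sum_Icc (by omega), stirling2_eq_stirlingSecond]
        simp only [prodInvSub, pdIter, div_eq_mul_inv, Finset.prod_inv_distrib]

/-- Lemma: expansion of the operator `D_{N,k}`.
At points with pairwise distinct coordinates, for `f` smooth (holomorphic),
`D_{N,k} f = Σ_{m=1}^k S(k,m) Σ_{ℓ=0}^m C(m,ℓ) ℓ! Σ_{|A|=ℓ+1} Σ_{i₀∈A}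
x_{i₀}^m ∂_{i₀}^{m-ℓ} f / ∏_{j∈A∖{i₀}}(x_{i₀}-x_j)`,
where the inner double sum realizes `Σ_{{i_0,…,i_ℓ}} Σ_cyc` (the denominator being symmetric in
`i_1,…,i_ℓ`). -/
theorem stmt12 (N k : ℕ) (hN : 1 ≤ N) (hk : 1 ≤ k)
    (f : (Fin N → ℂ) → ℂ) (U : Set (Fin N → ℂ)) (hU : IsOpen U)
    (hinj : ∀ x ∈ U, Function.Injective x) (hf : ContDiffOn ℂ ⊤ f U) :
    ∀ x ∈ U, DopOn (N := N) N le_rfl k f x =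
      ∑ m ∈ Finset.Icc 1 k, (stirling2 k m : ℂ) *
        ∑ ℓ ∈ Finset.range (m + 1), (m.choose ℓ : ℂ) * (ℓ.factorial : ℂ) *
          ∑ A ∈ (Finset.univ : Finset (Fin N)).powersetCard (ℓ + 1), ∑ i0 ∈ A,
            x i0 ^ m * pds (List.replicate (m - ℓ) i0) f x /
              ∏ j ∈ A.erase i0, (x i0 - x j) :=
  stmt12_general N k hk f U hU hinj hf
end

section
/- Let H be a holomorphic function on an open neighborhood of 1 ∈ ℂ and let k ≥ 0 be an integer. Then for all sufficiently small r > 0: (1/(2πi))·∮_{|w−1|=r} (1/w)·(wH′(w) + w/(w−1))^{k+1} dw = (k+1)·Σ_{ℓ=0}^k (1/(ℓ+1)!)·binom(k,ℓ)·(d/dz)^ℓ(z^k H′(z)^{k−ℓ})|_{z=1}, and (1/(2πi))·∮_{|w−1|=r} (1/(w−1))·(wH′(w) + w/(w−1))^k dw = Σ_{ℓ=0}^k (1/ℓ!)·binom(k,ℓ)·(d/dz)^ℓ(z^k H′(z)^{k−ℓ})|_{z=1}, where both contour integrals are taken counterclockwise around the circle of radius r centered at 1. -/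
open Metric Complex

/-!
Writing `w * H' w + w / (w - 1) = w * ((w - 1)⁻¹ + H' w)` and expanding by the binomial theorem,
each integrand becomes a holomorphic function plus a finite sum of terms
`(w - 1)⁻¹ ^ (ℓ + 1) * (w ^ k * H' w ^ (k - ℓ))`, whose contour integrals are given by Cauchy's
integral formula for the `ℓ`-th derivative at `1`.
-/

lemma DifferentiableOn.two_pi_I_inv_mul_circleIntegral_inv_sub_pow_mul {f : ℂ → ℂ} {c : ℂ}
    {R : ℝ} (hR : 0 < R) (hf : DifferentiableOn ℂ f (closedBall c R)) (n : ℕ) :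
    (2 * Real.pi * I)⁻¹ * (∮ z in C(c, R), (z - c)⁻¹ ^ (n + 1) * f z)
      = (n.factorial : ℂ)⁻¹ * iteratedDeriv n f c := by
  have h := hf.circleIntegral_one_div_sub_center_pow_smul hR n
  simp only [one_div, smul_eq_mul, ← inv_pow] at h
  rw [h]
  field_simp

lemma two_pi_I_inv_mul_circleIntegral_eq_sum_iteratedDeriv {c : ℂ} {R : ℝ} (hR : 0 < R)
    {g f₀ : ℂ → ℂ} {s : Finset ℕ} {a : ℕ → ℂ} {f : ℕ → ℂ → ℂ}
    (hf₀ : DifferentiableOn ℂ f₀ (closedBall c R))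
    (hf : ∀ ℓ ∈ s, DifferentiableOn ℂ (f ℓ) (closedBall c R))
    (hg : ∀ w ∈ sphere c R, g w = f₀ w + ∑ ℓ ∈ s, a ℓ * ((w - c)⁻¹ ^ (ℓ + 1) * f ℓ w)) :
    (2 * Real.pi * I)⁻¹ * (∮ w in C(c, R), g w)
      = ∑ ℓ ∈ s, a ℓ * ((ℓ.factorial : ℂ)⁻¹ * iteratedDeriv ℓ (f ℓ) c) := by
  have hpole : ContinuousOn (fun w => (w - c)⁻¹) (sphere c R) :=
    (continuousOn_id.sub continuousOn_const).inv₀ fun w hw =>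
      sub_ne_zero.2 (ne_of_mem_sphere hw hR.ne')
  have hterm : ∀ ℓ ∈ s, CircleIntegrable (fun w => a ℓ * ((w - c)⁻¹ ^ (ℓ + 1) * f ℓ w)) c R :=
    fun ℓ hℓ => ContinuousOn.circleIntegrable hR.le <| continuousOn_const.mul <|
      (hpole.pow _).mul ((hf ℓ hℓ).continuousOn.mono sphere_subset_closedBall)
  have hf₀_zero : (∮ w in C(c, R), f₀ w) = 0 :=
    circleIntegral_eq_zero_of_differentiable_on_off_countable hR.le Set.countable_empty
      hf₀.continuousOn fun z hz => hf₀.differentiableAt (closedBall_mem_nhds_of_mem hz.1)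
  rw [circleIntegral.integral_congr hR.le hg,
    circleIntegral.integral_add
      (hf₀.continuousOn.mono sphere_subset_closedBall |>.circleIntegrable hR.le)
      (CircleIntegrable.fun_sum s hterm),
    hf₀_zero, zero_add, circleIntegral.integral_fun_sum hterm, Finset.mul_sum]
  refine Finset.sum_congr rfl fun ℓ hℓ => ?_
  rw [circleIntegral.integral_const_mul, mul_left_comm,
    (hf ℓ hℓ).two_pi_I_inv_mul_circleIntegral_inv_sub_pow_mul hR]

section Expansion

variable {K : Type*} [Field K] (w A : K) (k : ℕ)

lemma mul_add_div_sub_one_pow :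
    (w * A + w / (w - 1)) ^ k
      = w ^ k * ∑ m ∈ Finset.range (k + 1), (w - 1)⁻¹ ^ m * A ^ (k - m) * k.choose m := by
  rw [div_eq_mul_inv, ← mul_add, mul_pow, add_comm A, add_pow]

lemma inv_sub_one_mul_mul_add_div_sub_one_pow :
    (w - 1)⁻¹ * (w * A + w / (w - 1)) ^ k
      = ∑ ℓ ∈ Finset.range (k + 1),
          (k.choose ℓ : K) * ((w - 1)⁻¹ ^ (ℓ + 1) * (w ^ k * A ^ (k - ℓ))) := by
  rw [mul_add_div_sub_one_pow, mul_left_comm, Finset.mul_sum, Finset.mul_sum]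
  refine Finset.sum_congr rfl fun ℓ _ => ?_
  ring

lemma inv_mul_mul_add_div_sub_one_pow_succ {w : K} (hw : w ≠ 0) :
    w⁻¹ * (w * A + w / (w - 1)) ^ (k + 1)
      = w ^ k * A ^ (k + 1) + ∑ ℓ ∈ Finset.range (k + 1),
          ((k + 1).choose (ℓ + 1) : K) * ((w - 1)⁻¹ ^ (ℓ + 1) * (w ^ k * A ^ (k - ℓ))) := by
  rw [mul_add_div_sub_one_pow, pow_succ', mul_assoc, inv_mul_cancel_left₀ hw,
    Finset.sum_range_succ', Nat.choose_zero_right, mul_add, add_comm, Finset.mul_sum]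
  congr 1
  · simp
  · refine Finset.sum_congr rfl fun ℓ _ => ?_
    rw [Nat.succ_sub_succ]
    ring

end Expansion

lemma Nat.cast_choose_succ_succ_mul_inv_factorial {K : Type*} [Field K] [CharZero K] (k ℓ : ℕ) :
    ((k + 1).choose (ℓ + 1) : K) * (ℓ.factorial : K)⁻¹
      = (k + 1) * (((ℓ + 1).factorial : K)⁻¹ * k.choose ℓ) := by
  have h : ((k + 1 : ℕ) * k.choose ℓ : K) = (k + 1).choose (ℓ + 1) * (ℓ + 1 : ℕ) := by
    exact_mod_cast Nat.add_one_mul_choose_eq k ℓ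
  rw [Nat.factorial_succ, Nat.cast_mul]
  field_simp
  push_cast at h ⊢
  rw [h]

/-- Proposition: contour integral formulas for the moments.
For `H` holomorphic near `1` and all sufficiently small `r > 0`, the counterclockwise contour
integrals around `1` compute the moment expressions `m_k` and `d_k`. -/
theorem stmt17 (H : ℂ → ℂ) (U : Set ℂ) (hU : IsOpen U) (h1 : (1 : ℂ) ∈ U)
    (hH : DifferentiableOn ℂ H U) (k : ℕ) :
    ∃ r₀ : ℝ, 0 < r₀ ∧ ∀ r : ℝ, 0 < r → r < r₀ →
      ((2 * Real.pi * Complex.I)⁻¹ *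
          (∮ w in C((1 : ℂ), r), w⁻¹ * (w * deriv H w + w / (w - 1)) ^ (k + 1))
        = ((k : ℂ) + 1) * ∑ ℓ ∈ Finset.range (k + 1),
            (((ℓ + 1).factorial : ℂ))⁻¹ * (k.choose ℓ : ℂ) *
              iteratedDeriv ℓ (fun z : ℂ => z ^ k * (deriv H z) ^ (k - ℓ)) 1) ∧
      ((2 * Real.pi * Complex.I)⁻¹ *
          (∮ w in C((1 : ℂ), r), (w - 1)⁻¹ * (w * deriv H w + w / (w - 1)) ^ k)
        = ∑ ℓ ∈ Finset.range (k + 1),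
            ((ℓ.factorial : ℂ))⁻¹ * (k.choose ℓ : ℂ) *
              iteratedDeriv ℓ (fun z : ℂ => z ^ k * (deriv H z) ^ (k - ℓ)) 1) := by
  obtain ⟨ε, hε, hball⟩ := Metric.isOpen_iff.1 hU 1 h1
  refine ⟨min ε 1, by positivity, fun r hr hr₀ => ?_⟩
  have hH' : DifferentiableOn ℂ (deriv H) (closedBall 1 r) :=
    (hH.analyticOnNhd hU).deriv.differentiableOn.mono
      ((closedBall_subset_ball (hr₀.trans_le (min_le_left _ _))).trans hball)
  have hterm (j : ℕ) : DifferentiableOn ℂ (fun w => w ^ k * deriv H w ^ j) (closedBall 1 r) :=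
    (differentiable_pow k).differentiableOn.mul (hH'.pow j)
  have hne (w : ℂ) (hw : w ∈ sphere 1 r) : w ≠ 0 := by
    rintro rfl
    simp only [mem_sphere_iff_norm, zero_sub, norm_neg, norm_one] at hw
    linarith [min_le_right ε 1]
  constructor
  · rw [two_pi_I_inv_mul_circleIntegral_eq_sum_iteratedDeriv hr (hterm (k + 1))
      (fun ℓ _ => hterm (k - ℓ))
      (fun w hw => inv_mul_mul_add_div_sub_one_pow_succ _ k (hne w hw)), Finset.mul_sum]
    refine Finset.sum_congr rfl fun ℓ _ => ?_
    rw [← mul_assoc, Nat.cast_choose_succ_succ_mul_inv_factorial]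
    ring
  · rw [two_pi_I_inv_mul_circleIntegral_eq_sum_iteratedDeriv hr (differentiableOn_const 0)
      (fun ℓ _ => hterm (k - ℓ))
      (fun w _ => by rw [zero_add]; exact inv_sub_one_mul_mul_add_div_sub_one_pow w _ k)]
    exact Finset.sum_congr rfl fun ℓ _ => by ring
end
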